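/- arXiv:2506.19756 — 4 statements merged into one kernel-verified Lean document; each statement's English description precedes it below -/
import Mathlib

section
/- For all natural numbers n and k with 0 ≤ k ≤ ⌊n/2⌋, one has (n−2k)! · k! ≥ ⌊n/3⌋!. -/
theorem Nat.factorial_max_le_factorial_mul_factorial (a b : ℕ) :
    (max a b).factorial ≤ a.factorial * b.factorial := by
  rcases le_total a b with hab | hab
  · rw [max_eq_right hab]
    exact Nat.le_mul_of_pos_left _ a.factorial_pos
  · rw [max_eq_left hab]
    exact Nat.le_mul_of_pos_right _ b.factorial_pos

theorem factorial_mul_factorial_ge_general (n k : ℕ) :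
    (n - 2 * k).factorial * k.factorial ≥ (n / 3).factorial :=
  -- If `k < n / 3` then `n - 2 * k > n / 3`, so one of the two factorials is already large.
  calc (n / 3).factorial ≤ (max (n - 2 * k) k).factorial := Nat.factorial_le (by omega)
    _ ≤ (n - 2 * k).factorial * k.factorial := Nat.factorial_max_le_factorial_mul_factorial _ _

/-- For all natural numbers `n` and `k` with `k ≤ ⌊n/2⌋`,
one has `(n − 2k)! · k! ≥ ⌊n/3⌋!`. -/
theorem factorial_mul_factorial_ge (n k : ℕ) (h : k ≤ n / 2) :
    (n - 2 * k).factorial * k.factorial ≥ (n / 3).factorial :=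
  factorial_mul_factorial_ge_general n k
end

section
/- Let N be a positive natural number, β > 0 a real number, and g : Fin N → ℝ injective. If c, c' : Fin N → ℝ satisfy, for every j ∈ Fin N, Σ_{i ∈ Fin N} c(i) · (exp(−β·g(i)))^(j+1) = Σ_{i ∈ Fin N} c'(i) · (exp(−β·g(i)))^(j+1), then c = c'. In particular, the numbers of secondary structures at each energy level are uniquely determined by the N magnified partition-function values b_j = Σ_i c(i)·(exp(−β·g(i)))^j for j = 1,…,N. -/
/-! The values `exp (-β g i)` are distinct and nonzero, so the system
`Σ_i c i · x_i^(j+1) = b_j`, `j < N`, is the Vandermonde system in the unknowns `c i · x_i`,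
whose matrix is invertible. -/

open Finset

theorem eq_of_forall_sum_mul_pow_succ_eq {R : Type*} [CommRing R] [IsDomain R] {n : ℕ}
    {x c c' : Fin n → R} (hx : Function.Injective x) (hx₀ : ∀ i, x i ≠ 0)
    (h : ∀ j : Fin n, ∑ i, c i * x i ^ ((j : ℕ) + 1) = ∑ i, c' i * x i ^ ((j : ℕ) + 1)) :
    c = c' := by
  have hzero : (fun i => (c i - c' i) * x i) = 0 := by
    refine Matrix.eq_zero_of_forall_pow_sum_mul_pow_eq_zero hx fun j => ?_
    simp only [mul_assoc, ← pow_succ', sub_mul, sum_sub_distrib, h j, sub_self]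
  funext i
  exact sub_eq_zero.mp ((mul_eq_zero.mp (congrFun hzero i)).resolve_right (hx₀ i))

theorem Real.exp_neg_mul_injective {β : ℝ} (hβ : β ≠ 0) :
    Function.Injective fun t : ℝ => Real.exp (-β * t) :=
  fun _ _ hst => mul_left_cancel₀ (neg_ne_zero.mpr hβ) (Real.exp_injective hst)

theorem counts_determined_by_magnified_pf_general (N : ℕ) (β : ℝ) (hβ : 0 < β)
    (g : Fin N → ℝ) (hg : Function.Injective g) (c c' : Fin N → ℝ)
    (h : ∀ j : Fin N,
      ∑ i : Fin N, c i * (Real.exp (-β * g i)) ^ ((j : ℕ) + 1) =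
      ∑ i : Fin N, c' i * (Real.exp (-β * g i)) ^ ((j : ℕ) + 1)) :
    c = c' :=
  eq_of_forall_sum_mul_pow_succ_eq ((Real.exp_neg_mul_injective hβ.ne').comp hg)
    (fun _ => (Real.exp_pos _).ne') h

/-- Let `N > 0`, `β > 0` and `g : Fin N → ℝ` injective. If `c, c' : Fin N → ℝ` give the
same magnified partition-function values
`Σ_i c i · (exp (−β · g i))^(j+1)` for every `j : Fin N`, then `c = c'`. -/
theorem counts_determined_by_magnified_pf (N : ℕ) (hN : 0 < N) (β : ℝ) (hβ : 0 < β)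
    (g : Fin N → ℝ) (hg : Function.Injective g) (c c' : Fin N → ℝ)
    (h : ∀ j : Fin N,
      ∑ i : Fin N, c i * (Real.exp (-β * g i)) ^ ((j : ℕ) + 1) =
      ∑ i : Fin N, c' i * (Real.exp (-β * g i)) ^ ((j : ℕ) + 1)) :
    c = c' :=
  counts_determined_by_magnified_pf_general N β hβ g hg c c' h
end

section
/- Let Ω be a nonempty finite set, G : Ω → ℝ, and let B > 1, δ > 0, and x be real numbers such that the cardinality of Ω is strictly less than B and every value G(S) satisfies either G(S) ≤ x or G(S) ≥ x + δ. Then the minimum of G over Ω is at most x if and only if Σ_{S ∈ Ω} B^(−G(S)/δ) ≥ B^(−x/δ). -/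
/-!
Put `t S = -G S / δ` and `t₀ = -x / δ`. If some `G S ≤ x`, the single term `B ^ t S` already
reaches `B ^ t₀`. Otherwise the energy gap puts every `t S` at most `t₀ - 1`, so each of the
`|Ω| < B` terms is at most `B ^ t₀ / B`, and the whole sum stays below `B ^ t₀`.
-/

open Finset Real

theorem Finset.rpow_le_sum_rpow {ι : Type*} {s : Finset ι} {i : ι} {B y : ℝ} {f : ι → ℝ}
    (hi : i ∈ s) (hB : 1 ≤ B) (hy : y ≤ f i) :
    B ^ y ≤ ∑ j ∈ s, B ^ f j :=
  calc B ^ y ≤ B ^ f i := rpow_le_rpow_of_exponent_le hB hy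
    _ ≤ ∑ j ∈ s, B ^ f j :=
      single_le_sum (fun j _ => (rpow_pos_of_pos (by linarith) (f j)).le) hi

theorem Finset.sum_rpow_lt_rpow_of_forall_le_sub_one {ι : Type*} (s : Finset ι) {B y : ℝ}
    {f : ι → ℝ} (hB : 1 ≤ B) (hcard : (#s : ℝ) < B) (hf : ∀ i ∈ s, f i ≤ y - 1) :
    ∑ i ∈ s, B ^ f i < B ^ y := by
  have hB₀ : 0 < B := by linarith
  calc ∑ i ∈ s, B ^ f i ≤ ∑ _i ∈ s, B ^ (y - 1) :=
        sum_le_sum fun i hi => rpow_le_rpow_of_exponent_le hB (hf i hi)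
    _ = #s * B ^ (y - 1) := by rw [sum_const, nsmul_eq_mul]
    _ < B * B ^ (y - 1) := mul_lt_mul_of_pos_right hcard (rpow_pos_of_pos hB₀ _)
    _ = B ^ y := by rw [rpow_sub_one hB₀.ne', mul_div_cancel₀ _ hB₀.ne']

theorem dMFE_iff_dPF_general {Ω : Type*} [Fintype Ω] [Nonempty Ω]
    (G : Ω → ℝ) (B δ x : ℝ) (hδ : 0 < δ)
    (hcard : (Fintype.card Ω : ℝ) < B)
    (hlevels : ∀ S : Ω, G S ≤ x ∨ G S ≥ x + δ) :
    Finset.univ.inf' Finset.univ_nonempty G ≤ x ↔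
      ∑ S : Ω, B ^ (-(G S) / δ) ≥ B ^ (-x / δ) := by
  have hB : 1 ≤ B := le_trans (by exact_mod_cast Fintype.card_pos) hcard.le
  rw [inf'_le_iff]
  constructor
  · rintro ⟨S, -, hS⟩
    exact rpow_le_sum_rpow (mem_univ S) hB (div_le_div_of_nonneg_right (neg_le_neg hS) hδ.le)
  · intro hsum
    by_contra! hlarge
    refine (sum_rpow_lt_rpow_of_forall_le_sub_one univ hB (by simpa using hcard)
      fun S _ => ?_).not_ge hsum
    have hgap := (hlevels S).resolve_left (hlarge S (mem_univ S)).not_ge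
    rw [le_sub_iff_add_le, div_add_one hδ.ne', div_le_div_iff_of_pos_right hδ]
    linarith

/-- Correctness of the magnification reduction from dMFE to dPF: let `Ω` be a nonempty
finite set, `G : Ω → ℝ`, `B > 1`, `δ > 0`, `x : ℝ`, with `|Ω| < B` and every value `G S`
satisfying `G S ≤ x` or `G S ≥ x + δ`. Then the minimum of `G` over `Ω` is at most `x`
iff `Σ_{S ∈ Ω} B^(−G S / δ) ≥ B^(−x / δ)`. -/
theorem dMFE_iff_dPF {Ω : Type*} [Fintype Ω] [Nonempty Ω]
    (G : Ω → ℝ) (B δ x : ℝ) (hB : 1 < B) (hδ : 0 < δ)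
    (hcard : (Fintype.card Ω : ℝ) < B)
    (hlevels : ∀ S : Ω, G S ≤ x ∨ G S ≥ x + δ) :
    Finset.univ.inf' Finset.univ_nonempty G ≤ x ↔
      ∑ S : Ω, B ^ (-(G S) / δ) ≥ B ^ (-x / δ) :=
  dMFE_iff_dPF_general G B δ x hδ hcard hlevels
end

section
/- Let (a_1,…,a_k, w, B) be a 4-PARTITION instance: k is a positive multiple of 4, w : {1,…,k} → ℤ⁺, B ∈ ℤ⁺, B/5 < w(a_i) < B/3 for all i, and Σ_{i=1}^k w(a_i) = B·k/4. Let s be the DNA strand C^{w(a_1)} A C^{w(a_2)} A ⋯ A C^{w(a_k)} A A A G^B A G^B A ⋯ A G^B (with k/4 substrings G^B separated by single A's), and let K = Σ_{i=1}^k w(a_i) − k. Then there exists a secondary structure S of s with BPS(S) = K if and only if {1,…,k} can be partitioned into k/4 four-element subsets each of total weight exactly B. -/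
/-- DNA bases. -/
inductive Base : Type
  | A | C | G | T
  deriving DecidableEq

/-- Watson–Crick complementarity: `{b₁, b₂} = {A, T}` or `{b₁, b₂} = {C, G}`. -/
def Complementary (b₁ b₂ : Base) : Prop :=
  (b₁ = Base.A ∧ b₂ = Base.T) ∨ (b₁ = Base.T ∧ b₂ = Base.A) ∨
  (b₁ = Base.C ∧ b₂ = Base.G) ∨ (b₁ = Base.G ∧ b₂ = Base.C)

/-- A secondary structure of a strand `s` (a word over `{A,C,G,T}`, positions `1,…,|s|`):
a finite set of pairs `(i, j)` of positions with `1 ≤ i < j ≤ |s|`, each position in at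
most one pair, and paired bases complementary. Pseudoknots are allowed. -/
def IsSecStructOf (s : List Base) (S : Finset (ℕ × ℕ)) : Prop :=
  (∀ p ∈ S, 1 ≤ p.1 ∧ p.1 < p.2 ∧ p.2 ≤ s.length ∧
    Complementary (s.getD (p.1 - 1) Base.A) (s.getD (p.2 - 1) Base.A)) ∧
  (∀ p ∈ S, ∀ q ∈ S, p ≠ q →
    p.1 ≠ q.1 ∧ p.1 ≠ q.2 ∧ p.2 ≠ q.1 ∧ p.2 ≠ q.2)

/-- The number of base pair stackings of `S`: `BPS(S) = |{(i,j) ∈ S : (i+1, j−1) ∈ S}|`. -/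
def BPS (S : Finset (ℕ × ℕ)) : ℕ :=
  (S.filter (fun p => (p.1 + 1, p.2 - 1) ∈ S)).card

/-- The strand `C^{w(a₁)} A C^{w(a₂)} A ⋯ A C^{w(a_k)} A A A G^B A G^B A ⋯ A G^B`
(with `k/4` substrings `G^B` separated by single `A`'s) of Lyngsø's reduction. -/
def lyngsoStrand (k B : ℕ) (w : Fin k → ℕ) : List Base :=
  (List.ofFn (fun i : Fin k => List.replicate (w i) Base.C ++ [Base.A])).flatten
    ++ [Base.A, Base.A]
    ++ List.intercalate [Base.A] (List.replicate (k / 4) (List.replicate B Base.G))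

/-!
Only `C`–`G` pairs are possible in this strand, and every `C` comes before every `G`. A stacking
therefore pairs two consecutive `C`s of one run with two consecutive `G`s, and a run of `w i`
`C`s offers `w i - 1` of them; so `K = Σ (w i - 1)` stackings force every run of `C`s to be
paired, in reverse order, with a stretch of a single `G`-run (the `A` between two `G`-runs breaks
a stack). Such a placement is a packing of the weights into `k / 4` bins of capacity `B`; as the
total weight is `B · k / 4` every bin is full, and `B/5 < w < B/3` puts exactly four items in
each. Conversely, laying out each quadruple of a 4-partition in its own `G`-run and pairing every
run of `C`s with its slot realises all `K` stackings. (If `B = 4`, all weights are `1` and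
`K = 0`.)
-/

section SecStruct

variable {s : List Base} {S : Finset (ℕ × ℕ)} {p q : ℕ × ℕ}

lemma IsSecStructOf.eq_of_fst_eq (hS : IsSecStructOf s S) (hp : p ∈ S) (hq : q ∈ S)
    (h : p.1 = q.1) : p = q := by
  by_contra hpq
  exact (hS.2 p hp q hq hpq).1 h

lemma IsSecStructOf.eq_of_snd_eq (hS : IsSecStructOf s S) (hp : p ∈ S) (hq : q ∈ S)
    (h : p.2 = q.2) : p = q := by
  by_contra hpq
  exact (hS.2 p hp q hq hpq).2.2.2 h

end SecStruct

namespace Lyngso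

section RunWord

open List

variable {α : Type*} (x y : α)

def runWord (l : List ℕ) : List α := (l.map fun n => replicate n x ++ [y]).flatten

def runStart (l : List ℕ) (i : ℕ) : ℕ := (l.take i).sum + i

@[simp] lemma runWord_nil : runWord x y [] = [] := rfl

@[simp] lemma runWord_cons (n : ℕ) (l : List ℕ) :
    runWord x y (n :: l) = replicate n x ++ y :: runWord x y l := by
  simp [runWord]

@[simp] lemma runStart_zero (l : List ℕ) : runStart l 0 = 0 := by simp [runStart]

@[simp] lemma runStart_cons_succ (n : ℕ) (l : List ℕ) (i : ℕ) :
    runStart (n :: l) (i + 1) = runStart l i + (n + 1) := by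
  simp only [runStart, take_succ_cons, sum_cons]; ring

lemma runStart_length (l : List ℕ) : runStart l l.length = l.sum + l.length := by
  simp [runStart]

lemma runStart_add_lt_runStart {l : List ℕ} {i j : ℕ} (hij : i < j) (hj : j ≤ l.length) :
    runStart l i + l[i] < runStart l j := by
  induction l generalizing i j with
  | nil => simp only [length_nil, nonpos_iff_eq_zero] at hj; omega
  | cons n l ih =>
    obtain ⟨j, rfl⟩ : ∃ j', j = j' + 1 := ⟨j - 1, by omega⟩
    cases i with
    | zero => simp only [runStart_zero, runStart_cons_succ, getElem_cons_zero]; omega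
    | succ i =>
      have := ih (i := i) (j := j) (by omega) (by simpa using hj)
      simp only [runStart_cons_succ, getElem_cons_succ]
      omega

lemma runStart_add_lt {l : List ℕ} {i d : ℕ} (hi : i < l.length) (hd : d ≤ l[i]) :
    runStart l i + d < l.sum + l.length := by
  have := runStart_add_lt_runStart hi le_rfl
  rw [runStart_length] at this
  omega

lemma runStart_add_inj {l : List ℕ} {i j d e : ℕ} (hi : i < l.length) (hj : j < l.length)
    (hd : d ≤ l[i]) (he : e ≤ l[j]) (h : runStart l i + d = runStart l j + e) :
    i = j ∧ d = e := by
  rcases lt_trichotomy i j with hij | rfl | hij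
  · have := runStart_add_lt_runStart hij hj.le; omega
  · omega
  · have := runStart_add_lt_runStart hij hi.le; omega

lemma getD_runWord_runStart {l : List ℕ} {i d : ℕ} (hi : i < l.length) (hd : d < l[i]) :
    (runWord x y l).getD (runStart l i + d) y = x := by
  induction l generalizing i with
  | nil => simp at hi
  | cons n l ih =>
    cases i with
    | zero =>
      simp only [getElem_cons_zero] at hd
      rw [runStart_zero, zero_add, runWord_cons, getD_append _ _ _ _ (by simpa using hd),
        getD_replicate x hd]
    | succ i =>
      simp only [length_cons, getElem_cons_succ] at hi hd
      rw [runWord_cons, runStart_cons_succ,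
        getD_append_right _ _ _ _ (by simp only [length_replicate]; omega)]
      simpa [show runStart l i + (n + 1) + d - n = (runStart l i + d) + 1 by omega]
        using ih (by omega) hd

lemma getD_runWord_eq_or_exists (l : List ℕ) (p : ℕ) :
    (runWord x y l).getD p y = y ∨ ∃ i, ∃ hi : i < l.length, ∃ d < l[i], p = runStart l i + d := by
  induction l generalizing p with
  | nil => simp
  | cons n l ih =>
    rw [runWord_cons]
    rcases lt_trichotomy p n with hp | rfl | hp
    · exact Or.inr ⟨0, by simp, p, by simpa using hp, by simp⟩
    · simp
    · obtain ⟨p, rfl⟩ : ∃ p', p = p' + (n + 1) := ⟨p - (n + 1), by omega⟩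
      rw [getD_append_right _ _ _ _ (by simp only [length_replicate]; omega), length_replicate,
        show p + (n + 1) - n = p + 1 by omega, getD_cons_succ]
      refine (ih p).imp id ?_
      rintro ⟨i, hi, d, hd, rfl⟩
      exact ⟨i + 1, by simpa using hi, d, by simpa using hd,
        by simp only [runStart_cons_succ]; ring⟩

@[simp] lemma length_runWord (l : List ℕ) : (runWord x y l).length = l.sum + l.length := by
  induction l with
  | nil => rfl
  | cons n l ih =>
    simp only [runWord_cons, length_append, length_replicate, length_cons, ih, sum_cons]
    ring

lemma intercalate_replicate_append (n : ℕ) (l : List α) :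
    [y].intercalate (replicate (n + 1) l) ++ [y] = (replicate (n + 1) (l ++ [y])).flatten := by
  induction n with
  | zero => simp
  | succ n ih =>
    rw [replicate_succ, intercalate_cons_of_ne_nil (by simp), append_assoc, ih,
      replicate_succ (n := n + 1), flatten_cons, append_assoc]

lemma lt_length_of_getD_ne {l : List α} {p : ℕ} {d : α} (h : l.getD p d ≠ d) :
    p < l.length := by
  by_contra hp
  exact h (getD_eq_default _ _ (not_lt.1 hp))

lemma getD_append_default (l : List α) (p : ℕ) (d : α) :
    (l ++ [d]).getD p d = l.getD p d := by
  rcases lt_or_ge p l.length with hp | hp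
  · exact getD_append _ _ _ _ hp
  · rw [getD_append_right _ _ _ _ hp, getD_eq_default _ _ hp]
    cases h : p - l.length <;> simp

end RunWord

section Strand

open List

variable {k : ℕ} (B : ℕ) (w : Fin k → ℕ)

/- 0-based indices into the strand, whereas pairs of a secondary structure use 1-based
positions: hence the `+ 1`s below. -/
def cPos (i : Fin k) (d : ℕ) : ℕ := runStart (ofFn w) i + d

def gPos (t e : ℕ) : ℕ := (∑ i, w i) + k + 2 + (runStart (replicate (k / 4) B) t + e)

/- For `k / 4 > 0` the right-hand side has an extra trailing `A`, which `getD` with default `A`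
cannot see. -/
lemma getD_lyngsoStrand (p : ℕ) :
    (lyngsoStrand k B w).getD p Base.A =
      (runWord Base.C Base.A (ofFn w) ++ [Base.A, Base.A] ++
        runWord Base.G Base.A (replicate (k / 4) B)).getD p Base.A := by
  have hC : (ofFn fun i => replicate (w i) Base.C ++ [Base.A]).flatten =
      runWord Base.C Base.A (ofFn w) := by
    rw [runWord, map_ofFn]; rfl
  rw [lyngsoStrand, hC]
  cases h : k / 4 with
  | zero => simp
  | succ n =>
    rw [← getD_append_default, append_assoc, append_assoc, intercalate_replicate_append]
    simp [runWord]

variable {B w}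

lemma cPos_lt {i : Fin k} {d : ℕ} (hd : d ≤ w i) : cPos w i d < (∑ i, w i) + k := by
  simpa [cPos, sum_ofFn] using runStart_add_lt (l := ofFn w) (i := i) (by simp) (by simpa using hd)

lemma cPos_lt_gPos {i : Fin k} {d : ℕ} (hd : d ≤ w i) (t e : ℕ) : cPos w i d < gPos B w t e := by
  have := cPos_lt hd
  unfold gPos
  omega

lemma cPos_inj {i j : Fin k} {d e : ℕ} (hd : d ≤ w i) (he : e ≤ w j)
    (h : cPos w i d = cPos w j e) : i = j ∧ d = e := by
  obtain ⟨hij, rfl⟩ := runStart_add_inj (l := ofFn w) (by simp) (by simp) (by simpa using hd)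
    (by simpa using he) h
  exact ⟨Fin.ext hij, rfl⟩

lemma gPos_inj {t u e f : ℕ} (ht : t < k / 4) (hu : u < k / 4) (he : e ≤ B) (hf : f ≤ B)
    (h : gPos B w t e = gPos B w u f) : t = u ∧ e = f :=
  runStart_add_inj (l := replicate (k / 4) B) (by simpa using ht) (by simpa using hu)
    (by simpa using he) (by simpa using hf) (by unfold gPos at h; omega)

lemma getD_cPos {i : Fin k} {d : ℕ} (hd : d < w i) :
    (lyngsoStrand k B w).getD (cPos w i d) Base.A = Base.C := by
  rw [getD_lyngsoStrand, append_assoc,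
    getD_append _ _ _ _ (by simpa [sum_ofFn] using cPos_lt hd.le)]
  exact getD_runWord_runStart _ _ (by simp) (by simpa using hd)

lemma getD_gPos {t e : ℕ} (ht : t < k / 4) (he : e < B) :
    (lyngsoStrand k B w).getD (gPos B w t e) Base.A = Base.G := by
  rw [getD_lyngsoStrand, getD_append_right _ _ _ _ (by simp [gPos, sum_ofFn])]
  rw [show gPos B w t e - (runWord Base.C Base.A (ofFn w) ++ [Base.A, Base.A]).length =
    runStart (replicate (k / 4) B) t + e by simp [gPos, sum_ofFn]]
  exact getD_runWord_runStart _ _ (by simpa using ht) (by simpa using he)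

lemma getD_lyngsoStrand_eq_or (p : ℕ) :
    (lyngsoStrand k B w).getD p Base.A = Base.A ∨ (∃ i d, d < w i ∧ p = cPos w i d) ∨
      ∃ t e, t < k / 4 ∧ e < B ∧ p = gPos B w t e := by
  rw [getD_lyngsoStrand]
  rcases lt_or_ge p ((∑ i, w i) + k) with hp | hp
  · rw [append_assoc, getD_append _ _ _ _ (by simpa [sum_ofFn] using hp)]
    refine (getD_runWord_eq_or_exists _ _ _ p).imp id fun ⟨i, hi, d, hd, h⟩ => Or.inl ?_
    exact ⟨⟨i, by simpa using hi⟩, d, by simpa using hd, h⟩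
  rcases lt_or_ge p ((∑ i, w i) + k + 2) with hp' | hp'
  · left
    rw [append_assoc, getD_append_right _ _ _ _ (by simpa [sum_ofFn] using hp),
      getD_append _ _ _ _ (by
        simp only [length_runWord, sum_ofFn, length_ofFn, length_cons, length_nil]; omega)]
    obtain h | h : p - (runWord Base.C Base.A (ofFn w)).length = 0 ∨
        p - (runWord Base.C Base.A (ofFn w)).length = 1 := by
      simp only [length_runWord, sum_ofFn, length_ofFn]; omega
    all_goals rw [h]; rfl
  obtain ⟨q, rfl⟩ : ∃ q, p = (∑ i, w i) + k + 2 + q := ⟨p - ((∑ i, w i) + k + 2), by omega⟩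
  rw [getD_append_right _ _ _ _ (by simp [sum_ofFn]),
    show (∑ i, w i) + k + 2 + q - (runWord Base.C Base.A (ofFn w) ++ [Base.A, Base.A]).length
      = q by simp [sum_ofFn]]
  refine (getD_runWord_eq_or_exists _ _ _ q).imp id fun ⟨t, ht, e, he, h⟩ => Or.inr ?_
  exact ⟨t, e, by simpa using ht, by simpa using he, by rw [gPos, h]⟩


variable {S : Finset (ℕ × ℕ)} in
lemma exists_eq_cPos_gPos_of_mem (hS : IsSecStructOf (lyngsoStrand k B w) S) {p : ℕ × ℕ}
    (hp : p ∈ S) : ∃ i d t e, d < w i ∧ t < k / 4 ∧ e < B ∧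
      p = (cPos w i d + 1, gPos B w t e + 1) := by
  obtain ⟨h1, hlt, -, hcomp⟩ := hS.1 p hp
  rcases getD_lyngsoStrand_eq_or (B := B) (w := w) (p.1 - 1) with
    ha | ⟨i, d, hd, ha⟩ | ⟨t, e, ht, he, ha⟩ <;>
  rcases getD_lyngsoStrand_eq_or (B := B) (w := w) (p.2 - 1) with
    hb | ⟨j, d', hd', hb⟩ | ⟨u, f, hu, hf, hb⟩
  all_goals first
    | rw [ha, getD_cPos hd] at hcomp
    | rw [ha, getD_gPos ht he] at hcomp
    | rw [ha] at hcomp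
  all_goals first
    | rw [hb, getD_cPos hd'] at hcomp
    | rw [hb, getD_gPos hu hf] at hcomp
    | rw [hb] at hcomp
  all_goals simp [Complementary] at hcomp
  · exact ⟨i, d, u, f, hd, hu, hf, Prod.ext (by omega) (by omega)⟩
  · have := cPos_lt_gPos (B := B) hd'.le t e
    omega

end Strand

open Finset

section Packing

variable {k : ℕ} (B : ℕ) (w : Fin k → ℕ)

def cells : Finset (Σ _ : Fin k, ℕ) := univ.sigma fun i => range (w i)

def innerCells : Finset (Σ _ : Fin k, ℕ) := univ.sigma fun i => range (w i - 1)

variable {w} in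
@[simp] lemma mem_cells {x : Σ _ : Fin k, ℕ} : x ∈ cells w ↔ x.2 < w x.1 := by simp [cells]

variable {w} in
@[simp] lemma mem_innerCells {x : Σ _ : Fin k, ℕ} : x ∈ innerCells w ↔ x.2 + 1 < w x.1 := by
  simp only [innerCells, mem_sigma, mem_univ, mem_range, true_and]; omega

lemma card_innerCells : (innerCells w).card = ∑ i, (w i - 1) := by simp [innerCells]

/-- Run `i` of `C`s is to be paired, in reverse, with the positions `off i, …, off i + w i - 1`
of the `G`-run `blk i`. -/
def IsPacking {n : ℕ} (blk : Fin k → Fin n) (off : Fin k → ℕ) : Prop :=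
  (∀ i, off i + w i ≤ B) ∧ Set.InjOn (fun x : Σ _ : Fin k, ℕ => (blk x.1, off x.1 + x.2)) (cells w)

def packPair (blk : Fin k → Fin (k / 4)) (off : Fin k → ℕ) (x : Σ _ : Fin k, ℕ) : ℕ × ℕ :=
  (cPos w x.1 x.2 + 1, gPos B w (blk x.1) (off x.1 + (w x.1 - 1 - x.2)) + 1)

variable {B w} {blk : Fin k → Fin (k / 4)} {off : Fin k → ℕ}

lemma packPair_fst_injOn {x y : Σ _ : Fin k, ℕ} (hx : x ∈ cells w) (hy : y ∈ cells w)
    (h : (packPair B w blk off x).1 = (packPair B w blk off y).1) : x = y := by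
  obtain ⟨i, d⟩ := x
  obtain ⟨j, e⟩ := y
  simp only [mem_cells] at hx hy
  obtain ⟨rfl, rfl⟩ := cPos_inj hx.le hy.le (by simpa [packPair] using h)
  rfl

lemma packPair_snd_injOn (hpack : IsPacking B w blk off) {x y : Σ _ : Fin k, ℕ}
    (hx : x ∈ cells w) (hy : y ∈ cells w)
    (h : (packPair B w blk off x).2 = (packPair B w blk off y).2) : x = y := by
  obtain ⟨i, d⟩ := x
  obtain ⟨j, e⟩ := y
  simp only [mem_cells] at hx hy
  have hi := hpack.1 i
  have hj := hpack.1 j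
  obtain ⟨hblk, hoff⟩ := gPos_inj (B := B) (w := w) (e := off i + (w i - 1 - d))
    (f := off j + (w j - 1 - e)) (blk i).2 (blk j).2 (by omega) (by omega)
    (by simpa [packPair] using h)
  have hx' : (⟨i, w i - 1 - d⟩ : Σ _ : Fin k, ℕ) ∈ cells w := mem_cells.2 (by dsimp only; omega)
  have hy' : (⟨j, w j - 1 - e⟩ : Σ _ : Fin k, ℕ) ∈ cells w := mem_cells.2 (by dsimp only; omega)
  have := hpack.2 hx' hy' (Prod.ext (Fin.ext hblk) hoff)
  simp only [Sigma.mk.injEq, heq_eq_eq] at this ⊢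
  obtain ⟨rfl, _⟩ := this
  exact ⟨rfl, by omega⟩

lemma packPair_fst_lt_snd {x : Σ _ : Fin k, ℕ}
    (hx : x ∈ cells w) (y : Σ _ : Fin k, ℕ) :
    (packPair B w blk off x).1 < (packPair B w blk off y).2 := by
  have := cPos_lt_gPos (B := B) (mem_cells.1 hx).le (blk y.1) (off y.1 + (w y.1 - 1 - y.2))
  simp only [packPair]
  omega

lemma isSecStructOf_image_packPair (hpack : IsPacking B w blk off) :
    IsSecStructOf (lyngsoStrand k B w) ((cells w).image (packPair B w blk off)) := by
  constructor
  · intro p hp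
    obtain ⟨x, hx, rfl⟩ := mem_image.1 hp
    have hG := getD_gPos (B := B) (w := w) (blk x.1).2
      (show off x.1 + (w x.1 - 1 - x.2) < B by have := hpack.1 x.1; have := mem_cells.1 hx; omega)
    refine ⟨by simp [packPair], packPair_fst_lt_snd hx x, ?_, ?_⟩
    · exact lt_length_of_getD_ne (hG.trans_ne (by decide))
    · simp only [packPair, Nat.add_sub_cancel]
      rw [getD_cPos (mem_cells.1 hx), hG]
      simp [Complementary]
  · intro p hp q hq hpq
    obtain ⟨x, hx, rfl⟩ := mem_image.1 hp
    obtain ⟨y, hy, rfl⟩ := mem_image.1 hq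
    have hxy : x ≠ y := fun h => hpq (h ▸ rfl)
    exact ⟨fun h => hxy (packPair_fst_injOn hx hy h), (packPair_fst_lt_snd hx y).ne,
      (packPair_fst_lt_snd hy x).ne', fun h => hxy (packPair_snd_injOn hpack hx hy h)⟩

lemma packPair_succ {x : Σ _ : Fin k, ℕ} (hx : x ∈ innerCells w) :
    packPair B w blk off ⟨x.1, x.2 + 1⟩ =
      ((packPair B w blk off x).1 + 1, (packPair B w blk off x).2 - 1) := by
  have := mem_innerCells.1 hx
  simp only [packPair, cPos, gPos, Prod.mk.injEq]
  omega

lemma filter_stacked_image_packPair :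
    ((cells w).image (packPair B w blk off)).filter
        (fun p => (p.1 + 1, p.2 - 1) ∈ (cells w).image (packPair B w blk off)) =
      (innerCells w).image (packPair B w blk off) := by
  ext p
  simp only [mem_filter, mem_image]
  constructor
  · rintro ⟨⟨x, hx, rfl⟩, y, hy, hxy⟩
    refine ⟨x, mem_innerCells.2 ?_, rfl⟩
    obtain ⟨hij, hd⟩ := cPos_inj (show x.2 + 1 ≤ w x.1 from mem_cells.1 hx) (mem_cells.1 hy).le
      (by simp only [packPair, Prod.ext_iff] at hxy; simp only [cPos] at hxy ⊢; omega)
    have := mem_cells.1 hy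
    rw [← hij, ← hd] at this
    exact this
  · rintro ⟨x, hx, rfl⟩
    have hx' := mem_innerCells.1 hx
    exact ⟨⟨x, mem_cells.2 (by omega), rfl⟩, ⟨x.1, x.2 + 1⟩, mem_cells.2 hx', packPair_succ hx⟩

lemma BPS_image_packPair :
    BPS ((cells w).image (packPair B w blk off)) = ∑ i, (w i - 1) := by
  rw [BPS, filter_stacked_image_packPair, ← card_innerCells,
    card_image_of_injOn fun x hx y hy h => packPair_fst_injOn
      (mem_cells.2 (by have := mem_innerCells.1 hx; omega))
      (mem_cells.2 (by have := mem_innerCells.1 hy; omega)) (congrArg Prod.fst h)]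

end Packing

section MaximalStacking

variable {k B : ℕ} {w : Fin k → ℕ} {S : Finset (ℕ × ℕ)}

lemma exists_stacked_of_BPS_eq (hS : IsSecStructOf (lyngsoStrand k B w) S)
    (hbps : BPS S = ∑ i, (w i - 1)) {x : Σ _ : Fin k, ℕ} (hx : x ∈ innerCells w) :
    ∃ g, (cPos w x.1 x.2 + 1, g) ∈ S ∧ (cPos w x.1 x.2 + 2, g - 1) ∈ S := by
  set T := S.filter fun p => (p.1 + 1, p.2 - 1) ∈ S
  have hsub : T.image Prod.fst ⊆ (innerCells w).image fun x => cPos w x.1 x.2 + 1 := by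
    intro a ha
    obtain ⟨p, hpT, rfl⟩ := mem_image.1 ha
    obtain ⟨hpS, hq⟩ := mem_filter.1 hpT
    obtain ⟨i, d, t, e, hd, -, -, rfl⟩ := exists_eq_cPos_gPos_of_mem hS hpS
    obtain ⟨j, d', _, _, hd', -, -, hq'⟩ := exists_eq_cPos_gPos_of_mem hS hq
    obtain ⟨rfl, rfl⟩ := cPos_inj (show d + 1 ≤ w i by omega) hd'.le
      (by have := congrArg Prod.fst hq'; simp only [cPos] at this ⊢; omega)
    exact mem_image.2 ⟨⟨i, d⟩, mem_innerCells.2 hd', rfl⟩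
  have hcard : ((innerCells w).image fun x => cPos w x.1 x.2 + 1).card ≤ (T.image Prod.fst).card :=
    calc _ ≤ (innerCells w).card := card_image_le
      _ = T.card := by rw [card_innerCells, ← hbps, BPS]
      _ = (T.image Prod.fst).card := (card_image_of_injOn fun p hp q hq h =>
          hS.eq_of_fst_eq (mem_filter.1 hp).1 (mem_filter.1 hq).1 h).symm
  obtain ⟨p, hpT, hp⟩ := mem_image.1 <|
    (eq_of_subset_of_card_le hsub hcard).symm ▸ mem_image_of_mem _ hx
  obtain ⟨hpS, hq⟩ := mem_filter.1 hpT
  exact ⟨p.2, hp ▸ hpS, by rw [show cPos w x.1 x.2 + 2 = p.1 + 1 by omega]; exact hq⟩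

lemma exists_gRun_of_BPS_eq (hS : IsSecStructOf (lyngsoStrand k B w) S)
    (hbps : BPS S = ∑ i, (w i - 1)) (i : Fin k) (hi : 2 ≤ w i) :
    ∃ t < k / 4, ∃ e < B, w i ≤ e + 1 ∧
      ∀ d < w i, (cPos w i d + 1, gPos B w t (e - d) + 1) ∈ S := by
  obtain ⟨g, hg, -⟩ := exists_stacked_of_BPS_eq hS hbps (x := ⟨i, 0⟩)
    (mem_innerCells.2 (show 0 + 1 < w i by omega))
  obtain ⟨j, d, t, e, hd, ht, he, hp⟩ := exists_eq_cPos_gPos_of_mem hS hg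
  obtain ⟨rfl, rfl⟩ := cPos_inj (show 0 ≤ w i by omega) hd.le
    (by simp only [Prod.ext_iff] at hp; omega)
  have key : ∀ d < w i, d ≤ e ∧ (cPos w i d + 1, gPos B w t (e - d) + 1) ∈ S := by
    intro d
    induction d with
    | zero => exact fun _ => ⟨Nat.zero_le _, by simpa [hp] using hg⟩
    | succ d ih =>
      intro hd
      obtain ⟨-, hmem⟩ := ih (by omega)
      obtain ⟨g', hg', hstk⟩ :=
        exists_stacked_of_BPS_eq hS hbps (x := ⟨i, d⟩)
          (mem_innerCells.2 (show d + 1 < w i by omega))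
      obtain rfl : g' = gPos B w t (e - d) + 1 := congrArg Prod.snd (hS.eq_of_fst_eq hg' hmem rfl)
      obtain ⟨_, _, u, f, -, hu, hf, hq⟩ := exists_eq_cPos_gPos_of_mem hS hstk
      -- `gPos t 0 - 1` is an `A`, so the partners never leave the `G`-run `t`
      obtain ⟨-, hef⟩ := gPos_inj (B := B) (w := w) (e := e - d) (f := f + 1) ht hu (by omega)
        (by omega) (by simp only [Prod.ext_iff] at hq; simp only [gPos] at hq ⊢; omega)
      refine ⟨by omega, ?_⟩
      rwa [show cPos w i (d + 1) + 1 = cPos w i d + 2 by simp only [cPos]; omega,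
        show gPos B w t (e - (d + 1)) + 1 = gPos B w t (e - d) + 1 - 1 by simp only [gPos]; omega]
  refine ⟨t, ht, e, he, ?_, fun d hd => (key d hd).2⟩
  have := (key (w i - 1) (by omega)).1
  omega

lemma exists_isPacking_of_BPS_eq (hS : IsSecStructOf (lyngsoStrand k B w) S)
    (hbps : BPS S = ∑ i, (w i - 1)) (hw : ∀ i, 2 ≤ w i) :
    ∃ (blk : Fin k → Fin (k / 4)) (off : Fin k → ℕ), IsPacking B w blk off := by
  choose t ht e he hwe hmem using fun i => exists_gRun_of_BPS_eq hS hbps i (hw i)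
  refine ⟨fun i => ⟨t i, ht i⟩, fun i => e i + 1 - w i,
    fun i => by dsimp only; have := he i; have := hwe i; omega, ?_⟩
  rintro ⟨i, d⟩ hx ⟨j, d'⟩ hy h
  simp only [mem_coe, mem_cells, Prod.mk.injEq, Fin.mk.injEq] at hx hy h
  have hi := hwe i
  have hj := hwe j
  have hp := hS.eq_of_snd_eq (hmem i (w i - 1 - d) (by omega)) (hmem j (w j - 1 - d') (by omega))
    (by dsimp only; rw [h.1]; simp only [gPos]; omega)
  obtain ⟨rfl, -⟩ := cPos_inj (w := w) (i := i) (j := j) (d := w i - 1 - d) (e := w j - 1 - d')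
    (by omega) (by omega) (by simpa using congrArg Prod.fst hp)
  simp only [Sigma.mk.injEq, heq_eq_eq, true_and]
  omega

end MaximalStacking

section Partition

variable {ι : Type*}

lemma card_eq_four_of_sum_eq {s : Finset ι} {w : ι → ℕ} {B : ℕ} (hB : 0 < B)
    (hlow : ∀ i ∈ s, B < 5 * w i) (hhigh : ∀ i ∈ s, 3 * w i < B) (hs : ∑ i ∈ s, w i = B) :
    s.card = 4 := by
  have hne : s.Nonempty := nonempty_of_sum_ne_zero (by rw [hs]; omega)
  have h5 : s.card * B < 5 * B := by
    simpa [← mul_sum, hs] using sum_lt_sum_of_nonempty hne hlow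
  have h3 : 3 * B < s.card * B := by
    simpa [← mul_sum, hs] using sum_lt_sum_of_nonempty hne hhigh
  have := Nat.lt_of_mul_lt_mul_right h5
  have := Nat.lt_of_mul_lt_mul_right h3
  omega

lemma sum_filter_lt_add_le [LinearOrder ι] (s : Finset ι) (w : ι → ℕ) {i j : ι} (hi : i ∈ s)
    (hij : i < j) : ∑ l ∈ s with l < i, w l + w i ≤ ∑ l ∈ s with l < j, w l := by
  rw [add_comm, ← sum_insert (f := w) (by simp)]
  exact sum_le_sum_of_subset (insert_subset (by simp [hi, hij]) fun l hl => by
    simp only [mem_filter] at hl ⊢; exact ⟨hl.1, hl.2.trans hij⟩)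

lemma sum_filter_lt_add_le_sum [LinearOrder ι] (s : Finset ι) (w : ι → ℕ) {i : ι} (hi : i ∈ s) :
    ∑ l ∈ s with l < i, w l + w i ≤ ∑ l ∈ s, w l := by
  rw [add_comm, ← sum_insert (f := w) (by simp)]
  exact sum_le_sum_of_subset (insert_subset hi (filter_subset _ _))

variable [Fintype ι] [DecidableEq ι]

lemma exists_partition_of_fibers {n : ℕ} (w : ι → ℕ) (B : ℕ) (blk : ι → Fin n)
    (hfib : ∀ t, (univ.filter (blk · = t)).card = 4 ∧ ∑ i ∈ univ.filter (blk · = t), w i = B) :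
    ∃ P : Finset (Finset ι), P.card = n ∧ (∀ x, ∃! t, t ∈ P ∧ x ∈ t) ∧
      ∀ t ∈ P, t.card = 4 ∧ ∑ i ∈ t, w i = B := by
  refine ⟨univ.image fun t => univ.filter (blk · = t), ?_, fun x => ?_, ?_⟩
  · rw [card_image_of_injective, card_fin]
    intro t u h
    obtain ⟨i, hi⟩ := card_pos.1 ((hfib t).1 ▸ by norm_num : 0 < (univ.filter (blk · = t)).card)
    have hu := hi
    simp only at h
    rw [h] at hu
    simp only [mem_filter, mem_univ, true_and] at hi hu
    exact hi.symm.trans hu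
  · refine ⟨univ.filter (blk · = blk x), ⟨mem_image_of_mem _ (mem_univ _), by simp⟩, ?_⟩
    rintro _ ⟨ht, hx⟩
    obtain ⟨t, -, rfl⟩ := mem_image.1 ht
    simp only [mem_filter, mem_univ, true_and] at hx
    rw [hx]
  · simp only [mem_image, mem_univ, true_and, forall_exists_index, forall_apply_eq_imp_iff]
    exact hfib

end Partition

section Bins

variable {k B : ℕ} {w : Fin k → ℕ} {n : ℕ} {blk : Fin k → Fin n} {off : Fin k → ℕ}

lemma sum_fiber_le_of_isPacking (hpack : IsPacking B w blk off) (t : Fin n) :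
    ∑ i ∈ univ.filter (blk · = t), w i ≤ B :=
  calc ∑ i ∈ univ.filter (blk · = t), w i
      = ((univ.filter (blk · = t)).sigma fun i => range (w i)).card := by simp
    _ ≤ (range B).card := by
      refine card_le_card_of_injOn (fun x => off x.1 + x.2) (fun x hx => ?_) fun x hx y hy h => ?_
      · simp only [coe_sigma, Set.mem_sigma_iff, coe_filter, mem_univ, true_and, Set.mem_ofPred_eq,
          coe_range, Set.mem_Iio] at hx ⊢
        have := hpack.1 x.1
        omega
      · simp only [coe_sigma, Set.mem_sigma_iff, coe_filter, mem_univ, true_and, Set.mem_ofPred_eq,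
          coe_range, Set.mem_Iio] at hx hy
        exact hpack.2 (mem_cells.2 hx.2) (mem_cells.2 hy.2) (Prod.ext (hx.1.trans hy.1.symm) h)
    _ = B := card_range B

lemma sum_fiber_eq_of_isPacking (hpack : IsPacking B w blk off) (hsum : ∑ i, w i = B * n)
    (t : Fin n) : ∑ i ∈ univ.filter (blk · = t), w i = B := by
  have htotal : ∑ u, ∑ i ∈ univ.filter (blk · = u), w i = ∑ _u : Fin n, B := by
    rw [sum_fiberwise, hsum, sum_const, card_univ, Fintype.card_fin, smul_eq_mul, mul_comm]
  exact (sum_eq_sum_iff_of_le fun u _ => sum_fiber_le_of_isPacking hpack u).1 htotal t (mem_univ t)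

lemma exists_fourPartition_of_isPacking (hpack : IsPacking B w blk off) (hB : 0 < B)
    (hlow : ∀ i, B < 5 * w i) (hhigh : ∀ i, 3 * w i < B) (hsum : ∑ i, w i = B * n) :
    ∃ P : Finset (Finset (Fin k)), P.card = n ∧ (∀ x, ∃! t, t ∈ P ∧ x ∈ t) ∧
      ∀ t ∈ P, t.card = 4 ∧ ∑ i ∈ t, w i = B :=
  exists_partition_of_fibers w B blk fun t =>
    ⟨card_eq_four_of_sum_eq hB (fun i _ => hlow i) (fun i _ => hhigh i)
      (sum_fiber_eq_of_isPacking hpack hsum t), sum_fiber_eq_of_isPacking hpack hsum t⟩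

lemma exists_isPacking_of_partition (P : Finset (Finset (Fin k))) (hP : P.card = n)
    (hcover : ∀ x, ∃! t, t ∈ P ∧ x ∈ t) (hsum : ∀ t ∈ P, ∑ i ∈ t, w i = B) :
    ∃ (blk : Fin k → Fin n) (off : Fin k → ℕ), IsPacking B w blk off := by
  choose part hpart hmem using fun x => (hcover x).exists
  refine ⟨fun i => P.equivFinOfCardEq hP ⟨part i, hpart i⟩,
    fun i => ∑ j ∈ part i with j < i, w j, fun i => ?_, ?_⟩
  · simpa [hsum _ (hpart i)] using sum_filter_lt_add_le_sum (part i) w (hmem i)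
  rintro ⟨i, d⟩ hx ⟨j, e⟩ hy h
  simp only [mem_coe, mem_cells, Prod.mk.injEq, EmbeddingLike.apply_eq_iff_eq,
    Subtype.mk.injEq] at hx hy h
  obtain ⟨hij, hoff⟩ := h
  rw [hij] at hoff
  rcases lt_trichotomy i j with hlt | rfl | hlt
  · have := sum_filter_lt_add_le (part j) w (hij ▸ hmem i) hlt
    omega
  · simp only [Sigma.mk.injEq, heq_eq_eq, true_and]
    omega
  · have := sum_filter_lt_add_le (part j) w (hmem j) hlt
    omega

lemma isPacking_div_four (hk4 : 4 ∣ k) (hB : 4 ≤ B) (hw : ∀ i, w i ≤ 1) :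
    IsPacking B w (fun i => ⟨i / 4, Nat.div_lt_div_of_lt_of_dvd hk4 i.2⟩) fun i => i % 4 := by
  refine ⟨fun i => by dsimp only; have := hw i; omega, ?_⟩
  rintro ⟨i, d⟩ hx ⟨j, e⟩ hy h
  simp only [mem_coe, mem_cells, Prod.mk.injEq, Fin.mk.injEq] at hx hy h
  have hi := hw i
  have hj := hw j
  have : i = j := Fin.ext (by rw [← Nat.div_add_mod i 4, ← Nat.div_add_mod j 4]; omega)
  subst this
  simp only [Sigma.mk.injEq, heq_eq_eq, true_and]
  omega

end Bins

end Lyngso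

open Lyngso

/-- Lyngsø-style reduction from 4-PARTITION to BPS: given a 4-PARTITION instance
`(a₁,…,a_k, w, B)` (with `k` a positive multiple of 4, positive weights,
`B/5 < w(aᵢ) < B/3`, and `Σᵢ w(aᵢ) = B·k/4`), the strand `s` admits a secondary structure
with exactly `K = Σᵢ w(aᵢ) − k` base pair stackings iff `{1,…,k}` can be partitioned into
`k/4` four-element subsets each of total weight exactly `B`. -/
theorem bps_iff_fourPartition (k B : ℕ) (w : Fin k → ℕ)
    (hk : 0 < k) (hk4 : 4 ∣ k) (hB : 0 < B) (hw : ∀ i, 0 < w i)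
    (hlow : ∀ i, B < 5 * w i) (hhigh : ∀ i, 3 * w i < B)
    (hsum : ∑ i, w i = B * (k / 4)) :
    (∃ S : Finset (ℕ × ℕ),
        IsSecStructOf (lyngsoStrand k B w) S ∧ BPS S = (∑ i, w i) - k) ↔
    (∃ P : Finset (Finset (Fin k)),
        P.card = k / 4 ∧
        (∀ x : Fin k, ∃! t, t ∈ P ∧ x ∈ t) ∧
        (∀ t ∈ P, t.card = 4 ∧ ∑ i ∈ t, w i = B)) := by
  have hK : ∑ i, (w i - 1) = (∑ i, w i) - k := by
    rw [Finset.sum_tsub_distrib _ fun i _ => hw i]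
    simp
  constructor
  · rintro ⟨S, hS, hbps⟩
    obtain ⟨blk, off, hpack⟩ :
        ∃ (blk : Fin k → Fin (k / 4)) (off : Fin k → ℕ), IsPacking B w blk off := by
      by_cases h5 : 5 ≤ B
      · exact exists_isPacking_of_BPS_eq hS (hbps.trans hK.symm) fun i => by
          have := hlow i; omega
      · -- here every weight is `1`: take the quadruples `4q, …, 4q + 3`
        exact ⟨_, _, isPacking_div_four hk4
          (by have := hhigh ⟨0, hk⟩; have := hw ⟨0, hk⟩; omega) fun i => by have := hhigh i; omega⟩
    exact exists_fourPartition_of_isPacking hpack hB hlow hhigh hsum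
  · rintro ⟨P, hP, hcover, hparts⟩
    obtain ⟨blk, off, hpack⟩ :=
      exists_isPacking_of_partition P hP hcover fun t ht => (hparts t ht).2
    exact ⟨_, isSecStructOf_image_packPair hpack, BPS_image_packPair.trans hK⟩
end
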